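/- arXiv:2312.10956 — 6 statements merged into one kernel-verified Lean document; each statement's English description precedes it below -/
import Mathlib

section
/- Every finite connected biconvex bipartite graph has a biconvex S-ordering: there exist linear orders <_A on A and <_B on B such that (i) for every a ∈ A the neighborhood N(a) is an interval of (B, <_B) and for every b ∈ B the neighborhood N(b) is an interval of (A, <_A), and (ii) whenever edges a_i b_s and a_j b_r are cross edges (a_i <_A a_j and b_r <_B b_s, or a_j <_A a_i and b_s <_B b_r), at least one of a_i b_r and a_j b_s is also an edge of G. -/
/-- `G` is bipartite with parts `A` and `B`. -/
def IsBipartiteWith {V : Type*} (G : SimpleGraph V) (A B : Set V) : Prop :=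
  A ∩ B = ∅ ∧ A ∪ B = Set.univ ∧
    ∀ ⦃u v : V⦄, G.Adj u v → (u ∈ A ∧ v ∈ B) ∨ (u ∈ B ∧ v ∈ A)

/-- The pair of linear orders `(lA, lB)` is a biconvex ordering of `G = (A, B, E)`. -/
def BiconvexOrdering {V : Type*} (G : SimpleGraph V) (A B : Set V)
    (lA : LinearOrder ↥A) (lB : LinearOrder ↥B) : Prop :=
  (∀ (a : ↥A) (x y z : ↥B), lB.le x y → lB.le y z →
      G.Adj ↑a ↑x → G.Adj ↑a ↑z → G.Adj ↑a ↑y) ∧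
  (∀ (b : ↥B) (x y z : ↥A), lA.le x y → lA.le y z →
      G.Adj ↑x ↑b → G.Adj ↑z ↑b → G.Adj ↑y ↑b)

/-- The edges `ai-bs` and `aj-br` are cross edges with respect to `(lA, lB)`. -/
def CrossEdges {V : Type*} {A B : Set V} (lA : LinearOrder ↥A) (lB : LinearOrder ↥B)
    (ai aj : ↥A) (bs br : ↥B) : Prop :=
  (lA.lt ai aj ∧ lB.lt br bs) ∨ (lA.lt aj ai ∧ lB.lt bs br)

/-- A biconvex S-ordering: a biconvex ordering such that whenever a pair of cross
edges `ai-bs`, `aj-br` exists, at least one of `ai-br` and `aj-bs` is an edge. -/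
def SOrdering {V : Type*} (G : SimpleGraph V) (A B : Set V)
    (lA : LinearOrder ↥A) (lB : LinearOrder ↥B) : Prop :=
  BiconvexOrdering G A B lA lB ∧
  ∀ (ai aj : ↥A) (bs br : ↥B), G.Adj ↑ai ↑bs → G.Adj ↑aj ↑br →
    CrossEdges lA lB ai aj bs br → (G.Adj ↑ai ↑br ∨ G.Adj ↑aj ↑bs)

/-!
Record each `a ∈ A` by its neighbourhood, an interval `I a` of `(B, <_B)`. Convexity of the
neighbourhoods `N(b)` says that each set `{a | b ∈ I a}` is convex in `<_A`, and a pair of cross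
edges violates the S-condition exactly when an interval lying strictly to the left of another
one (both endpoints smaller) comes later in `<_A`. So `A` has to be reordered along a linear
extension of "strictly left of" while keeping these sets convex.

Since the graph is connected, the maximal intervals appear along `<_A` in the order of their left
endpoints, possibly after reversing `<_A`. An interval placed between two maximal ones is then
central: it is squeezed between two overlapping maximal intervals, so no interval contains it
with room on both sides. Every other interval lies before the first maximal interval `m`, hence
inside `I m`, or after the last one `M`, hence inside `I M`, and the intervals on each side form a
chain under inclusion; in particular no three non-central intervals form a chain for "strictly
left of". The new order lists an inclusion-increasing chain inside `I m`, then the central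
intervals sorted by right and then left endpoint, then an inclusion-decreasing chain inside
`I M`; a non-central interval inside `I m` joins the first chain unless some non-central interval
lies strictly to its left.
-/

open Set OrderDual

namespace NonemptyInterval

variable {β : Type*} [LinearOrder β] {S : Set (NonemptyInterval β)} {s t u : NonemptyInterval β}

def StrictlyLeft (s t : NonemptyInterval β) : Prop := s.fst < t.fst ∧ s.snd < t.snd

theorem StrictlyLeft.trans (hst : StrictlyLeft s t) (htu : StrictlyLeft t u) : StrictlyLeft s u :=
  ⟨hst.1.trans htu.1, hst.2.trans htu.2⟩

theorem StrictlyLeft.not_le (h : StrictlyLeft s t) : ¬ s ≤ t :=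
  fun hle => (le_def.1 hle).1.not_gt h.1

theorem StrictlyLeft.not_ge (h : StrictlyLeft s t) : ¬ t ≤ s :=
  fun hle => (le_def.1 hle).2.not_gt h.2

theorem le_or_le_or_strictlyLeft_or_strictlyLeft (s t : NonemptyInterval β) :
    s ≤ t ∨ t ≤ s ∨ StrictlyLeft s t ∨ StrictlyLeft t s := by
  simp only [le_def, StrictlyLeft]
  rcases lt_trichotomy s.fst t.fst with h | h | h <;>
    rcases lt_trichotomy s.snd t.snd with h' | h' | h' <;>
    simp [h, h', h.le, h'.le, h.not_gt, h'.not_gt]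

theorem fst_lt_fst_iff_of_maximal (hs : Maximal (· ∈ S) s) (ht : Maximal (· ∈ S) t) :
    s.fst < t.fst ↔ s.snd < t.snd := by
  constructor
  · intro h
    by_contra! h'
    exact h.not_ge (le_def.1 (ht.2 hs.1 (le_def.2 ⟨h.le, h'⟩))).1
  · intro h
    by_contra! h'
    exact h.not_ge (le_def.1 (hs.2 ht.1 (le_def.2 ⟨h', h.le⟩))).2

theorem fst_le_fst_iff_of_maximal (hs : Maximal (· ∈ S) s) (ht : Maximal (· ∈ S) t) :
    s.fst ≤ t.fst ↔ s.snd ≤ t.snd := by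
  simpa only [not_lt] using (fst_lt_fst_iff_of_maximal ht hs).not

theorem eq_of_maximal_of_fst_eq (hs : Maximal (· ∈ S) s) (ht : Maximal (· ∈ S) t)
    (h : s.fst = t.fst) : s = t :=
  hs.eq_of_le ht.1 (le_def.2 ⟨h.ge, (fst_le_fst_iff_of_maximal hs ht).1 h.le⟩)

end NonemptyInterval

namespace IntervalFamily

open NonemptyInterval

section Family

variable {α β : Type*} [LinearOrder β] (I : α → NonemptyInterval β) {p q w : α}

abbrev IsMaxInterval (x : α) : Prop := Maximal (· ∈ range I) (I x)

def NoGap : Prop :=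
  ∀ u w, (I u).snd < (I w).fst → ∃ x, (I u).snd < (I x).snd ∧ (I x).fst < (I w).fst

variable {I} [Finite α]

theorem exists_le_isMaxInterval (x : α) : ∃ t, I x ≤ I t ∧ IsMaxInterval I t := by
  obtain ⟨_, hle, hmax⟩ := (finite_range I).exists_le_maximal (mem_range_self x)
  obtain ⟨t, rfl⟩ := hmax.1
  exact ⟨t, hle, hmax⟩

theorem exists_isMaxInterval_between (hgap : NoGap I) (hp : IsMaxInterval I p)
    (h : (I p).snd < (I q).fst) :
    ∃ t, IsMaxInterval I t ∧ (I p).fst < (I t).fst ∧ (I t).fst < (I q).fst := by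
  obtain ⟨x, hpx, hxq⟩ := hgap p q h
  obtain ⟨t, hxt, ht⟩ := exists_le_isMaxInterval (I := I) x
  exact ⟨t, ht, (fst_lt_fst_iff_of_maximal hp ht).2 (hpx.trans_le (le_def.1 hxt).2),
    (le_def.1 hxt).1.trans_lt hxq⟩

theorem exists_isMaxInterval_pred (hgap : NoGap I)
    (h : ∃ u, IsMaxInterval I u ∧ (I u).fst < (I w).fst) :
    ∃ s, IsMaxInterval I s ∧ (I s).fst < (I w).fst ∧ (I w).fst ≤ (I s).snd ∧
      ∀ t, IsMaxInterval I t → (I t).fst < (I w).fst → (I t).fst ≤ (I s).fst := by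
  obtain ⟨s, ⟨hs, hsw⟩, hmax⟩ :=
    exists_max_image {t | IsMaxInterval I t ∧ (I t).fst < (I w).fst} (fun t => (I t).fst)
      (toFinite _) h
  refine ⟨s, hs, hsw, le_of_not_gt fun hsep => ?_, fun t ht htw => hmax t ⟨ht, htw⟩⟩
  obtain ⟨t, ht, hst, htw⟩ := exists_isMaxInterval_between hgap hs hsep
  exact (hmax t ⟨ht, htw⟩).not_gt hst

end Family

section Orientation

variable {α β : Type*} [LinearOrder α] [LinearOrder β] {I : α → NonemptyInterval β}
  {p q r u u' w w' x y z : α}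

variable (I) in
def MaxMonotone : Prop :=
  ∀ u w, IsMaxInterval I u → IsMaxInterval I w → (I u).fst < (I w).fst → u < w

theorem mem_of_mem_uIcc (hconv : ∀ b, {x | b ∈ I x}.OrdConnected) {b : β} (hy : y ∈ uIcc x z)
    (hx : b ∈ I x) (hz : b ∈ I z) : b ∈ I y :=
  (hconv b).uIcc_subset hx hz hy

theorem le_of_mem_uIcc (hconv : ∀ b, {x | b ∈ I x}.OrdConnected) (hy : y ∈ uIcc x z)
    (h : I x ≤ I z) : I x ≤ I y := by
  rw [← coe_subset_coe]
  exact fun b hb => mem_of_mem_uIcc hconv hy hb (coe_subset_coe.2 h hb)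

theorem eq_of_mem_uIcc_of_twin (hconv : ∀ b, {x | b ∈ I x}.OrdConnected)
    (hx : IsMaxInterval I x) (hxz : I x = I z) (hy : y ∈ uIcc x z) : I y = I x :=
  (hx.eq_of_le (mem_range_self y) (le_of_mem_uIcc hconv hy hxz.le)).symm

theorem lt_of_lt_of_twins (hconv : ∀ b, {x | b ∈ I x}.OrdConnected)
    (hu : IsMaxInterval I u) (hw : IsMaxInterval I w) (hne : I u ≠ I w) (huw : u < w)
    (hu' : I u' = I u) (hw' : I w' = I w) : u' < w' := by
  have hu'w : u' < w := lt_of_not_ge fun h =>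
    hne (eq_of_mem_uIcc_of_twin hconv hu hu'.symm (mem_uIcc.2 (Or.inl ⟨huw.le, h⟩))).symm
  exact lt_of_not_ge fun h => hne <| hu'.symm.trans <|
    eq_of_mem_uIcc_of_twin hconv hw hw'.symm (mem_uIcc.2 (Or.inr ⟨h, hu'w.le⟩))

theorem between_of_overlap (hconv : ∀ b, {x | b ∈ I x}.OrdConnected)
    (hp : IsMaxInterval I p) (hq : IsMaxInterval I q) (hr : IsMaxInterval I r)
    (hpq : (I p).fst < (I q).fst) (hqr : (I q).fst < (I r).fst)
    (hqp : (I q).fst ≤ (I p).snd) (hrq : (I r).fst ≤ (I q).snd) :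
    (p < q ∧ q < r) ∨ (r < q ∧ q < p) := by
  have hp_out : p ∉ uIcc q r := fun h =>
    ((fst_lt_fst_iff_of_maximal hp hq).1 hpq).not_ge <| (mem_def.1 <| mem_of_mem_uIcc hconv h
      (mem_def.2 ⟨(I q).fst_le_snd, le_rfl⟩)
      (mem_def.2 ⟨hrq, ((fst_lt_fst_iff_of_maximal hq hr).1 hqr).le⟩)).2
  have hr_out : r ∉ uIcc p q := fun h =>
    hqr.not_ge <| (mem_def.1 <| mem_of_mem_uIcc hconv h
      (mem_def.2 ⟨hpq.le, hqp⟩) (mem_def.2 ⟨le_rfl, (I q).fst_le_snd⟩)).1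
  simp only [mem_uIcc, not_or, not_and, not_le] at hp_out hr_out
  grind

variable [Finite α]

/-- By induction on the left endpoint of `w`: the predecessor `s` of `w` and the predecessor `r`
of `s` overlap their successors, so `s` lies between `r` and `w`. -/
theorem maxMonotone_of_lt (hconv : ∀ b, {x | b ∈ I x}.OrdConnected) (hgap : NoGap I)
    {u₀ w₀ : α} (hu₀ : IsMaxInterval I u₀) (hw₀ : IsMaxInterval I w₀)
    (hu₀_min : ∀ t, IsMaxInterval I t → (I u₀).fst ≤ (I t).fst)
    (hw₀_min : ∀ t, IsMaxInterval I t → (I u₀).fst < (I t).fst → (I w₀).fst ≤ (I t).fst)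
    (hlt : (I u₀).fst < (I w₀).fst) (hpos : u₀ < w₀) : MaxMonotone I := by
  have hwf : WellFounded fun x y : α => (I x).fst < (I y).fst :=
    Finite.wellFounded_of_trans_of_irrefl _
  intro u w hu hw huw
  induction w using hwf.induction generalizing u with
  | _ w ih =>
  obtain ⟨s, hs, hsw, hws, hs_max⟩ := exists_isMaxInterval_pred hgap ⟨u, hu, huw⟩
  have twin_lt : ∀ u', IsMaxInterval I u' → I u' = I s → u' < w := by
    intro u' hu' hu's
    rcases (hu₀_min s hs).eq_or_lt with h | h
    -- base case: `I s = I u₀` and `I w = I w₀`, and `u₀ < w₀` transfers to twins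
    · have hww₀ : (I w).fst = (I w₀).fst :=
        le_antisymm (le_of_not_gt fun h' => (h ▸ hs_max w₀ hw₀ h').not_gt hlt)
          (hw₀_min w hw (h ▸ hsw))
      exact lt_of_lt_of_twins hconv hu₀ hw₀ (fun h' => hlt.ne (congrArg (·.fst) h')) hpos
        (hu's.trans (eq_of_maximal_of_fst_eq hs hu₀ h.symm))
        (eq_of_maximal_of_fst_eq hw hw₀ hww₀)
    · obtain ⟨r, hr, hrs, hsr, -⟩ := exists_isMaxInterval_pred hgap ⟨u₀, hu₀, h⟩
      rw [← hu's] at hsw hws hrs hsr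
      have hru' : r < u' := ih u' hsw r hr hu' hrs
      exact ((between_of_overlap hconv hr hu' hw hrs hsw hsr hws).resolve_right
        fun h' => h'.2.not_gt hru').2
  rcases (hs_max u hu huw).eq_or_lt with h | h
  · exact twin_lt u hu (eq_of_maximal_of_fst_eq hu hs h)
  · exact (ih s hsw u hu hs h).trans (twin_lt s hs rfl)

theorem maxMonotone_or_maxMonotone_ofDual (hconv : ∀ b, {x | b ∈ I x}.OrdConnected)
    (hgap : NoGap I) : MaxMonotone I ∨ MaxMonotone (I ∘ ofDual) := by
  by_cases h : ∃ u w, IsMaxInterval I u ∧ IsMaxInterval I w ∧ (I u).fst < (I w).fst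
  swap
  · exact Or.inl fun u w hu hw huw => (h ⟨u, w, hu, hw, huw⟩).elim
  obtain ⟨u, w, hu, hw, huw⟩ := h
  obtain ⟨u₀, hu₀, hu₀_min⟩ :=
    exists_min_image {t | IsMaxInterval I t} (fun t => (I t).fst) (toFinite _) ⟨u, hu⟩
  obtain ⟨w₀, ⟨hw₀, hlt⟩, hw₀_min⟩ :=
    exists_min_image {t | IsMaxInterval I t ∧ (I u₀).fst < (I t).fst} (fun t => (I t).fst)
      (toFinite _) ⟨w, hw, (hu₀_min u hu).trans_lt huw⟩
  rcases lt_or_gt_of_ne (show u₀ ≠ w₀ by rintro rfl; exact hlt.false) with hpos | hpos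
  · exact Or.inl (maxMonotone_of_lt hconv hgap hu₀ hw₀ hu₀_min
      (fun t ht h => hw₀_min t ⟨ht, h⟩) hlt hpos)
  · exact Or.inr (maxMonotone_of_lt (I := I ∘ ofDual) (fun b => (hconv b).dual) hgap hu₀ hw₀
      hu₀_min (fun t ht h => hw₀_min t ⟨ht, h⟩) hlt hpos)

end Orientation

section Regions

variable {α β : Type*} [LinearOrder β] {I : α → NonemptyInterval β} {m M u v x y : α}

variable (I m M) in
def IsCentral (x : α) : Prop :=
  (I m).snd ≤ (I x).snd ∧ (I x).fst ≤ (I M).fst ∧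
    ∀ y, (I y).fst < (I x).fst → (I y).snd ≤ (I x).snd

variable (I m M) in
def IsLeft (x : α) : Prop :=
  ¬ IsCentral I m M x ∧ I x ≤ I m ∧ ∀ y, ¬ IsCentral I m M y → ¬ StrictlyLeft (I y) (I x)

variable (I m M) in
def IsRight (x : α) : Prop := ¬ IsCentral I m M x ∧ ¬ IsLeft I m M x

theorem IsLeft.le_or_ge (hx : IsLeft I m M x) (hy : IsLeft I m M y) : I x ≤ I y ∨ I y ≤ I x := by
  rcases le_or_le_or_strictlyLeft_or_strictlyLeft (I x) (I y) with h | h | h | h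
  · exact Or.inl h
  · exact Or.inr h
  · exact (hy.2.2 x hx.1 h).elim
  · exact (hx.2.2 y hy.1 h).elim

variable (β) in
abbrev Key : Type _ := (β ×ₗ βᵒᵈ) ⊕ₗ (β ×ₗ β) ⊕ₗ (βᵒᵈ ×ₗ β)

open Classical in
variable (I m M) in
noncomputable def key (x : α) : Key β :=
  if IsLeft I m M x then toLex (.inl (toLex ((I x).snd, toDual (I x).fst)))
  else if IsCentral I m M x then toLex (.inr (toLex (.inl (toLex ((I x).snd, (I x).fst)))))
  else toLex (.inr (toLex (.inr (toLex (toDual (I x).snd, (I x).fst)))))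

theorem key_of_isLeft (hx : IsLeft I m M x) :
    key I m M x = toLex (.inl (toLex ((I x).snd, toDual (I x).fst))) :=
  if_pos hx

theorem key_of_isCentral (hx : IsCentral I m M x) :
    key I m M x = toLex (.inr (toLex (.inl (toLex ((I x).snd, (I x).fst))))) := by
  rw [key, if_neg fun h => h.1 hx, if_pos hx]

theorem key_of_isRight (hx : IsRight I m M x) :
    key I m M x = toLex (.inr (toLex (.inr (toLex (toDual (I x).snd, (I x).fst))))) := by
  rw [key, if_neg hx.2, if_neg hx.1]

theorem isLeft_of_key_le (h : key I m M u ≤ key I m M v) (hv : IsLeft I m M v) :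
    IsLeft I m M u := by
  by_contra hu
  rw [key_of_isLeft hv] at h
  by_cases hc : IsCentral I m M u
  · rw [key_of_isCentral hc] at h
    exact Sum.Lex.not_inr_le_inl h
  · rw [key_of_isRight ⟨hc, hu⟩] at h
    exact Sum.Lex.not_inr_le_inl h

theorem isRight_of_key_le (h : key I m M u ≤ key I m M v) (hu : IsRight I m M u) :
    IsRight I m M v := by
  rw [key_of_isRight hu] at h
  refine ⟨fun hc => ?_, fun hl => ?_⟩
  · rw [key_of_isCentral hc] at h
    exact Sum.Lex.not_inr_le_inl (Sum.Lex.inr_le_inr_iff.1 h)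
  · rw [key_of_isLeft hl] at h
    exact Sum.Lex.not_inr_le_inl h

theorem IsLeft.le_of_key_le (hu : IsLeft I m M u) (hv : IsLeft I m M v)
    (h : key I m M u ≤ key I m M v) : I u ≤ I v := by
  rw [key_of_isLeft hu, key_of_isLeft hv, Sum.Lex.inl_le_inl_iff, Prod.Lex.toLex_le_toLex] at h
  rcases h with h | ⟨h, h'⟩
  · exact (hu.le_or_ge hv).resolve_right fun hvu => (le_def.1 hvu).2.not_gt h
  · exact le_def.2 ⟨toDual_le_toDual.1 h', h.le⟩

theorem IsCentral.snd_le_of_key_le (hv : IsCentral I m M v) (h : key I m M u ≤ key I m M v) :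
    (I u).snd ≤ (I v).snd := by
  by_cases hul : IsLeft I m M u
  · exact (le_def.1 hul.2.1).2.trans hv.1
  by_cases huc : IsCentral I m M u
  · rw [key_of_isCentral huc, key_of_isCentral hv, Sum.Lex.inr_le_inr_iff,
      Sum.Lex.inl_le_inl_iff, Prod.Lex.toLex_le_toLex] at h
    exact h.elim le_of_lt fun h => h.1.le
  · exact ((isRight_of_key_le h ⟨huc, hul⟩).1 hv).elim

end Regions

section SOrderKey

variable {α β K : Type*} [LinearOrder β] [LinearOrder K] {I : α → NonemptyInterval β}
  {κ : α → K} {u w : α} {b b' : β}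

variable (I) in
def IsSOrderKey (κ : α → K) : Prop :=
  (∀ b u v w, κ u ≤ κ v → κ v ≤ κ w → b ∈ I u → b ∈ I w → b ∈ I v) ∧
    ∀ u w, κ u ≤ κ w → ¬ StrictlyLeft (I w) (I u)

theorem IsSOrderKey.mem_or_mem (hκ : IsSOrderKey I κ) (huw : κ u ≤ κ w) (hb : b' < b)
    (hu : b ∈ I u) (hw : b' ∈ I w) : b' ∈ I u ∨ b ∈ I w := by
  by_contra! h
  rw [mem_def] at hu hw h
  exact hκ.2 u w huw ⟨hw.1.trans_lt (lt_of_not_ge fun h' => h.1 ⟨h', hb.le.trans hu.2⟩),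
    (lt_of_not_ge fun h' => h.2 ⟨hw.1.trans hb.le, h'⟩).trans_le hu.2⟩

end SOrderKey

section Oriented

variable {α β : Type*} [LinearOrder α] [LinearOrder β] [Finite α] {I : α → NonemptyInterval β}
  {m M u v w x y z : α}

theorem le_of_lt_of_isLeast (hconv : ∀ b, {x | b ∈ I x}.OrdConnected)
    (hm : IsLeast {t | IsMaxInterval I t} m) (hx : x < m) : I x ≤ I m := by
  obtain ⟨t, hxt, ht⟩ := exists_le_isMaxInterval (I := I) x
  exact le_of_mem_uIcc hconv (mem_uIcc.2 (Or.inl ⟨hx.le, hm.2 ht⟩)) hxt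

theorem le_of_isGreatest_lt (hconv : ∀ b, {x | b ∈ I x}.OrdConnected)
    (hM : IsGreatest {t | IsMaxInterval I t} M) (hx : M < x) : I x ≤ I M :=
  le_of_lt_of_isLeast (I := I ∘ ofDual) (fun b => (hconv b).dual) hM hx

theorem le_or_ge_of_lt_of_lt_of_isLeast (hconv : ∀ b, {x | b ∈ I x}.OrdConnected)
    (hm : IsLeast {t | IsMaxInterval I t} m) (hx : x < m) (hy : y < m) :
    I x ≤ I y ∨ I y ≤ I x := by
  rcases le_total x y with hxy | hxy
  · exact Or.inl (le_of_mem_uIcc hconv (mem_uIcc.2 (Or.inl ⟨hxy, hy.le⟩))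
      (le_of_lt_of_isLeast hconv hm hx))
  · exact Or.inr (le_of_mem_uIcc hconv (mem_uIcc.2 (Or.inl ⟨hxy, hx.le⟩))
      (le_of_lt_of_isLeast hconv hm hy))

theorem le_or_ge_of_isGreatest_lt_of_lt (hconv : ∀ b, {x | b ∈ I x}.OrdConnected)
    (hM : IsGreatest {t | IsMaxInterval I t} M) (hx : M < x) (hy : M < y) :
    I x ≤ I y ∨ I y ≤ I x :=
  le_or_ge_of_lt_of_lt_of_isLeast (I := I ∘ ofDual) (fun b => (hconv b).dual) hM hx hy

theorem fst_le_fst_of_isLeast (hmono : MaxMonotone I) (hm : IsLeast {t | IsMaxInterval I t} m)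
    (x : α) : (I m).fst ≤ (I x).fst := by
  obtain ⟨t, hxt, ht⟩ := exists_le_isMaxInterval (I := I) x
  exact (le_of_not_gt fun h => (hmono t m ht hm.1 h).not_ge (hm.2 ht)).trans (le_def.1 hxt).1

theorem snd_le_snd_of_isGreatest (hmono : MaxMonotone I)
    (hM : IsGreatest {t | IsMaxInterval I t} M) (x : α) : (I x).snd ≤ (I M).snd := by
  obtain ⟨t, hxt, ht⟩ := exists_le_isMaxInterval (I := I) x
  refine (le_def.1 hxt).2.trans (le_of_not_gt fun h => ?_)
  exact (hmono M t hM.1 ht ((fst_lt_fst_iff_of_maximal hM.1 ht).2 h)).not_ge (hM.2 ht)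

theorem isCentral_of_isMaxInterval (hmono : MaxMonotone I)
    (hm : IsLeast {t | IsMaxInterval I t} m) (hM : IsGreatest {t | IsMaxInterval I t} M)
    (hx : IsMaxInterval I x) : IsCentral I m M x :=
  ⟨(fst_le_fst_iff_of_maximal hm.1 hx).1 (fst_le_fst_of_isLeast hmono hm x),
    (fst_le_fst_iff_of_maximal hx hM.1).2 (snd_le_snd_of_isGreatest hmono hM x),
    fun y hyx => le_of_not_gt fun hxy =>
      hyx.not_ge (le_def.1 (hx.2 (mem_range_self y) (le_def.2 ⟨hyx.le, hxy.le⟩))).1⟩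

structure IsOrientedFamily (I : α → NonemptyInterval β) (m M : α) : Prop where
  ordConnected : ∀ b, {x | b ∈ I x}.OrdConnected
  noGap : NoGap I
  maxMonotone : MaxMonotone I
  isLeast : IsLeast {t | IsMaxInterval I t} m
  isGreatest : IsGreatest {t | IsMaxInterval I t} M

namespace IsOrientedFamily

/-- An interval placed between two maximal intervals is squeezed between the last maximal
interval `p` before it and the first one `q` after it, which overlap. -/
theorem isCentral_of_mem_Icc (h : IsOrientedFamily I m M) (hmx : m ≤ x) (hxM : x ≤ M) :
    IsCentral I m M x := by
  obtain ⟨hconv, hgap, hmono, hm, hM⟩ := h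
  by_cases hx : IsMaxInterval I x
  · exact isCentral_of_isMaxInterval hmono hm hM hx
  have hne : ∀ t, IsMaxInterval I t → t ≠ x := by rintro t ht rfl; exact hx ht
  obtain ⟨p, ⟨hp, hpx⟩, hp_max⟩ := exists_max_image {t | IsMaxInterval I t ∧ t < x}
    (fun t => (I t).fst) (toFinite _) ⟨m, hm.1, hmx.lt_of_ne (hne m hm.1)⟩
  obtain ⟨q, ⟨hq, hxq⟩, hq_min⟩ := exists_min_image {t | IsMaxInterval I t ∧ x < t}
    (fun t => (I t).fst) (toFinite _) ⟨M, hM.1, hxM.lt_of_ne (hne M hM.1).symm⟩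
  have hside : ∀ t, IsMaxInterval I t → (I t).fst ≤ (I p).fst ∨ (I q).fst ≤ (I t).fst := by
    intro t ht
    rcases lt_or_gt_of_ne (hne t ht) with htx | hxt
    · exact Or.inl (hp_max t ⟨ht, htx⟩)
    · exact Or.inr (hq_min t ⟨ht, hxt⟩)
  have hpq : (I p).fst ≤ (I q).fst :=
    le_of_not_gt fun h => (hpx.trans hxq).not_gt (hmono q p hq hp h)
  have hqp : (I q).fst ≤ (I p).snd := le_of_not_gt fun h => by
    obtain ⟨t, ht, hpt, htq⟩ := exists_isMaxInterval_between hgap hp h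
    exact (hside t ht).elim hpt.not_ge htq.not_ge
  have hpx_snd : (I p).snd ≤ (I x).snd := (mem_def.1 <| mem_of_mem_uIcc hconv
    (mem_uIcc.2 (Or.inl ⟨hpx.le, hxq.le⟩)) (mem_def.2 ⟨(I p).fst_le_snd, le_rfl⟩)
    (mem_def.2 ⟨hqp, (fst_le_fst_iff_of_maximal hp hq).1 hpq⟩)).2
  have hxq_fst : (I x).fst ≤ (I q).fst := (mem_def.1 <| mem_of_mem_uIcc hconv
    (mem_uIcc.2 (Or.inl ⟨hpx.le, hxq.le⟩)) (mem_def.2 ⟨hpq, hqp⟩)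
    (mem_def.2 ⟨le_rfl, (I q).fst_le_snd⟩)).1
  refine ⟨((fst_le_fst_iff_of_maximal hm.1 hp).1 (hp_max m ⟨hm.1, ?_⟩)).trans hpx_snd,
    hxq_fst.trans (hq_min M ⟨hM.1, ?_⟩), fun y hyx => le_of_not_gt fun hxy => ?_⟩
  · exact hmx.lt_of_ne (hne m hm.1)
  · exact hxM.lt_of_ne (hne M hM.1).symm
  obtain ⟨t, hyt, ht⟩ := exists_le_isMaxInterval (I := I) y
  rcases hside t ht with htp | hqt
  · exact ((fst_le_fst_iff_of_maximal ht hp).1 htp).not_gt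
      (hpx_snd.trans_lt (hxy.trans_le (le_def.1 hyt).2))
  · exact hqt.not_gt (((le_def.1 hyt).1.trans_lt hyx).trans_le hxq_fst)

theorem lt_or_gt_of_not_isCentral (h : IsOrientedFamily I m M) (hx : ¬ IsCentral I m M x) :
    x < m ∨ M < x := by
  by_contra! h'
  exact hx (h.isCentral_of_mem_Icc h'.1 h'.2)

theorem not_and_of_strictlyLeft (h : IsOrientedFamily I m M)
    (hxy : StrictlyLeft (I x) (I y)) : ¬ (x < m ∧ y < m) ∧ ¬ (M < x ∧ M < y) :=
  ⟨fun ⟨hx, hy⟩ => (le_or_ge_of_lt_of_lt_of_isLeast h.ordConnected h.isLeast hx hy).elim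
      hxy.not_le hxy.not_ge,
    fun ⟨hx, hy⟩ => (le_or_ge_of_isGreatest_lt_of_lt h.ordConnected h.isGreatest hx hy).elim
      hxy.not_le hxy.not_ge⟩

theorem not_strictlyLeft_of_strictlyLeft (h : IsOrientedFamily I m M)
    (hx : ¬ IsCentral I m M x) (hy : ¬ IsCentral I m M y) (hz : ¬ IsCentral I m M z)
    (hzx : StrictlyLeft (I z) (I x)) : ¬ StrictlyLeft (I x) (I y) := by
  intro hxy
  -- two of `x`, `y`, `z` lie on the same side of the maximal intervals
  have hzx' := h.not_and_of_strictlyLeft hzx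
  have hxy' := h.not_and_of_strictlyLeft hxy
  have hzy' := h.not_and_of_strictlyLeft (hzx.trans hxy)
  rcases h.lt_or_gt_of_not_isCentral hx with hx' | hx' <;>
    rcases h.lt_or_gt_of_not_isCentral hy with hy' | hy' <;>
    rcases h.lt_or_gt_of_not_isCentral hz with hz' | hz'
  all_goals first
    | exact hzx'.1 ⟨‹_›, ‹_›⟩ | exact hzx'.2 ⟨‹_›, ‹_›⟩ | exact hxy'.1 ⟨‹_›, ‹_›⟩
    | exact hxy'.2 ⟨‹_›, ‹_›⟩ | exact hzy'.1 ⟨‹_›, ‹_›⟩ | exact hzy'.2 ⟨‹_›, ‹_›⟩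

theorem le_and_le_of_strictlyLeft (h : IsOrientedFamily I m M)
    (hx : ¬ IsCentral I m M x) (hy : ¬ IsCentral I m M y) (hxy : StrictlyLeft (I x) (I y)) :
    I x ≤ I m ∧ I y ≤ I M := by
  rcases h.lt_or_gt_of_not_isCentral hx with hxm | hMx
  · have hMy : M < y := (h.lt_or_gt_of_not_isCentral hy).resolve_left fun hym =>
      (h.not_and_of_strictlyLeft hxy).1 ⟨hxm, hym⟩
    exact ⟨le_of_lt_of_isLeast h.ordConnected h.isLeast hxm,
      le_of_isGreatest_lt h.ordConnected h.isGreatest hMy⟩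
  · have hym : y < m := (h.lt_or_gt_of_not_isCentral hy).resolve_right fun hMy =>
      (h.not_and_of_strictlyLeft hxy).2 ⟨hMx, hMy⟩
    have hy_le := le_def.1 (le_of_lt_of_isLeast h.ordConnected h.isLeast hym)
    have hx_le := le_def.1 (le_of_isGreatest_lt h.ordConnected h.isGreatest hMx)
    exact ⟨le_def.2 ⟨fst_le_fst_of_isLeast h.maxMonotone h.isLeast x, hxy.2.le.trans hy_le.2⟩,
      le_def.2 ⟨hx_le.1.trans hxy.1.le, snd_le_snd_of_isGreatest h.maxMonotone h.isGreatest y⟩⟩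

theorem le_of_isRight (h : IsOrientedFamily I m M) (hx : IsRight I m M x) : I x ≤ I M := by
  obtain ⟨hxc, hxl⟩ := hx
  by_cases hxm : I x ≤ I m
  · simp only [IsLeft, hxc, hxm, not_false_eq_true, true_and, not_forall, not_not] at hxl
    obtain ⟨y, hyc, hyx⟩ := hxl
    exact (h.le_and_le_of_strictlyLeft hyc hxc hyx).2
  · rcases h.lt_or_gt_of_not_isCentral hxc with hx' | hx'
    · exact (hxm (le_of_lt_of_isLeast h.ordConnected h.isLeast hx')).elim
    · exact le_of_isGreatest_lt h.ordConnected h.isGreatest hx'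

theorem le_or_ge_of_isRight (h : IsOrientedFamily I m M)
    (hx : IsRight I m M x) (hy : IsRight I m M y) : I x ≤ I y ∨ I y ≤ I x := by
  have not_strictlyLeft : ∀ x y, IsRight I m M x → IsRight I m M y →
      ¬ StrictlyLeft (I x) (I y) := by
    intro x y hx hy hxy
    obtain ⟨z, hzc, hzx⟩ : ∃ z, ¬ IsCentral I m M z ∧ StrictlyLeft (I z) (I x) := by
      by_contra! hz
      exact hx.2 ⟨hx.1, (h.le_and_le_of_strictlyLeft hx.1 hy.1 hxy).1, hz⟩
    exact h.not_strictlyLeft_of_strictlyLeft hx.1 hy.1 hzc hzx hxy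
  rcases le_or_le_or_strictlyLeft_or_strictlyLeft (I x) (I y) with h' | h' | h' | h'
  · exact Or.inl h'
  · exact Or.inr h'
  · exact (not_strictlyLeft x y hx hy h').elim
  · exact (not_strictlyLeft y x hy hx h').elim

theorem ge_of_key_le_of_isRight (h : IsOrientedFamily I m M) (hu : IsRight I m M u)
    (hv : IsRight I m M v) (huv : key I m M u ≤ key I m M v) : I v ≤ I u := by
  rw [key_of_isRight hu, key_of_isRight hv, Sum.Lex.inr_le_inr_iff, Sum.Lex.inr_le_inr_iff,
    Prod.Lex.toLex_le_toLex] at huv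
  rcases huv with huv | ⟨huv, huv'⟩
  · exact (h.le_or_ge_of_isRight hu hv).resolve_left fun h' =>
      (le_def.1 h').2.not_gt (toDual_lt_toDual.1 huv)
  · exact le_def.2 ⟨huv', toDual_le_toDual.1 huv.le⟩

theorem fst_le_of_key_le_of_isCentral (h : IsOrientedFamily I m M) (hv : IsCentral I m M v)
    (hvw : key I m M v ≤ key I m M w) : (I v).fst ≤ (I w).fst := by
  by_cases hwc : IsCentral I m M w
  · rw [key_of_isCentral hv, key_of_isCentral hwc, Sum.Lex.inr_le_inr_iff,
      Sum.Lex.inl_le_inl_iff, Prod.Lex.toLex_le_toLex] at hvw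
    exact hvw.elim (fun hlt => le_of_not_gt fun hwv => (hv.2.2 w hwv).not_gt hlt) And.right
  · have hwl : ¬ IsLeft I m M w := fun hwl => (isLeft_of_key_le hvw hwl).1 hv
    exact hv.2.1.trans (le_def.1 (h.le_of_isRight ⟨hwc, hwl⟩)).1

theorem isSOrderKey_key (h : IsOrientedFamily I m M) : IsSOrderKey I (key I m M) := by
  refine ⟨fun b u v w huv hvw hu hw => ?_, fun u w huw hwu => ?_⟩
  · by_cases hvl : IsLeft I m M v
    · exact coe_subset_coe.2 ((isLeft_of_key_le huv hvl).le_of_key_le hvl huv) hu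
    by_cases hvc : IsCentral I m M v
    · exact mem_def.2 ⟨(h.fst_le_of_key_le_of_isCentral hvc hvw).trans (mem_def.1 hw).1,
        (mem_def.1 hu).2.trans (hvc.snd_le_of_key_le huv)⟩
    · exact coe_subset_coe.2
        (h.ge_of_key_le_of_isRight ⟨hvc, hvl⟩ (isRight_of_key_le hvw ⟨hvc, hvl⟩) hvw) hw
  · by_cases huc : IsCentral I m M u
    · exact (h.fst_le_of_key_le_of_isCentral huc huw).not_gt hwu.1
    by_cases hwc : IsCentral I m M w
    · exact (hwc.snd_le_of_key_le huw).not_gt hwu.2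
    by_cases hul : IsLeft I m M u
    · by_cases hwl : IsLeft I m M w
      · exact hwu.not_ge (hul.le_of_key_le hwl huw)
      · exact hul.2.2 w hwc hwu
    · exact hwu.not_le (h.ge_of_key_le_of_isRight ⟨huc, hul⟩
        (isRight_of_key_le huw ⟨huc, hul⟩) huw)

end IsOrientedFamily

theorem exists_isSOrderKey (hconv : ∀ b, {x | b ∈ I x}.OrdConnected) (hgap : NoGap I) :
    ∃ κ : α → Key β, IsSOrderKey I κ := by
  rcases isEmpty_or_nonempty α with hα | ⟨⟨x⟩⟩
  · exact ⟨isEmptyElim, fun _ u => isEmptyElim u, fun u => isEmptyElim u⟩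
  obtain ⟨t, -, ht⟩ := exists_le_isMaxInterval (I := I) x
  obtain ⟨m, hm, hm_le⟩ := exists_min_image {t | IsMaxInterval I t} id (toFinite _) ⟨t, ht⟩
  obtain ⟨M, hM, hM_ge⟩ := exists_max_image {t | IsMaxInterval I t} id (toFinite _) ⟨t, ht⟩
  -- `IsSOrderKey` does not involve the order of `α`, so reversing it is harmless
  rcases maxMonotone_or_maxMonotone_ofDual hconv hgap with hmono | hmono
  · exact ⟨_, IsOrientedFamily.isSOrderKey_key ⟨hconv, hgap, hmono, ⟨hm, hm_le⟩, ⟨hM, hM_ge⟩⟩⟩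
  · exact ⟨_, IsOrientedFamily.isSOrderKey_key (I := I ∘ ofDual)
      ⟨fun b => (hconv b).dual, hgap, hmono, ⟨hM, hM_ge⟩, ⟨hm, hm_le⟩⟩⟩

end Oriented

end IntervalFamily

theorem Set.OrdConnected.exists_nonemptyInterval_eq {β : Type*} [LinearOrder β] {s : Set β}
    (hs : s.OrdConnected) (hfin : s.Finite) (hne : s.Nonempty) :
    ∃ J : NonemptyInterval β, (J : Set β) = s := by
  obtain ⟨a, ha, ha_min⟩ := exists_min_image s id hfin hne
  obtain ⟨b, hb, hb_max⟩ := exists_max_image s id hfin hne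
  exact ⟨⟨(a, b), ha_min b hb⟩, Subset.antisymm (hs.out ha hb) fun c hc =>
    ⟨ha_min c hc, hb_max c hc⟩⟩

theorem exists_nonemptyInterval_of_ordConnected {α β : Type*} [LinearOrder β] [Finite β]
    {r : α → β → Prop} (hconv : ∀ a, {b | r a b}.OrdConnected) (hne : ∀ a, ∃ b, r a b) :
    ∃ I : α → NonemptyInterval β, ∀ a b, b ∈ I a ↔ r a b := by
  choose I hI using fun a => (hconv a).exists_nonemptyInterval_eq (toFinite _) (hne a)
  exact ⟨I, fun a b => (SetLike.mem_coe).symm.trans (Set.ext_iff.1 (hI a) b)⟩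

namespace SimpleGraph

variable {V : Type*} {G : SimpleGraph V}

theorem Preconnected.mem_of_adj_closed (hconn : G.Preconnected) {S : Set V}
    (hS : ∀ u v, G.Adj u v → u ∈ S → v ∈ S) {u : V} (hu : u ∈ S) (v : V) : v ∈ S := by
  induction (reachable_iff_reflTransGen u v).1 (hconn u v) with
  | refl => exact hu
  | tail _ hadj ih => exact hS _ _ hadj ih

theorem Preconnected.not_adj_of_forall_not_adj (hconn : G.Preconnected) {a : V}
    (ha : ∀ v, ¬ G.Adj a v) (u v : V) : ¬ G.Adj u v := fun huv =>
  have hS : ∀ x y, G.Adj x y → x ∈ ({a} : Set V) → y ∈ ({a} : Set V) :=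
    fun _ y hxy hx => (ha y (hx ▸ hxy)).elim
  G.ne_of_adj huv ((hconn.mem_of_adj_closed hS rfl u).trans
    (hconn.mem_of_adj_closed hS rfl v).symm)

end SimpleGraph

section BipartiteGraph

variable {V : Type*} {G : SimpleGraph V} {A B : Set V} {u v : V}

theorem IsBipartiteWith.notMem_right (hbip : IsBipartiteWith G A B) (hu : u ∈ A) : u ∉ B :=
  (disjoint_iff_inter_eq_empty.2 hbip.1).notMem_of_mem_left hu

theorem IsBipartiteWith.mem_right_of_adj (hbip : IsBipartiteWith G A B) (hu : u ∈ A)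
    (huv : G.Adj u v) : v ∈ B :=
  (hbip.2.2 huv).elim And.right fun h => (hbip.notMem_right hu h.1).elim

open IntervalFamily NonemptyInterval in
/-- Cutting `B` right after the end of `I u` disconnects the graph unless some interval
crosses the cut. -/
theorem IsBipartiteWith.noGap [LinearOrder B] (hbip : IsBipartiteWith G A B)
    (hconn : G.Connected) {I : A → NonemptyInterval B} (hI : ∀ a b, b ∈ I a ↔ G.Adj a b) :
    NoGap I := by
  intro u w huw
  by_contra! hsep
  let S : Set V := {v | (∀ h : v ∈ A, (I ⟨v, h⟩).snd ≤ (I u).snd) ∧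
    ∀ h : v ∈ B, (⟨v, h⟩ : B) ≤ (I u).snd}
  have hS : ∀ v v', G.Adj v v' → v ∈ S → v' ∈ S := by
    intro v v' hvv' hv
    rcases hbip.2.2 hvv' with ⟨hvA, hv'B⟩ | ⟨hvB, hv'A⟩
    · refine ⟨fun h => (hbip.notMem_right h hv'B).elim, fun h => ?_⟩
      exact (mem_def.1 ((hI ⟨v, hvA⟩ ⟨v', h⟩).2 hvv')).2.trans (hv.1 hvA)
    · refine ⟨fun h => le_of_not_gt fun hc => ?_, fun h => (hbip.notMem_right hv'A h).elim⟩
      have hmem := mem_def.1 ((hI ⟨v', h⟩ ⟨v, hvB⟩).2 hvv'.symm)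
      exact huw.not_ge (((hsep _ hc).trans hmem.1).trans (hv.2 hvB))
  have hw := hconn.preconnected.mem_of_adj_closed hS (u := u)
    ⟨fun _ => le_rfl, fun h => (hbip.notMem_right u.2 h).elim⟩ w
  exact (huw.trans_le (I w).fst_le_snd).not_ge (hw.1 w.2)

end BipartiteGraph

theorem IntervalFamily.IsSOrderKey.exists_sOrdering {V : Type*} {G : SimpleGraph V}
    {A B : Set V} [LinearOrder A] [lB : LinearOrder B] {K : Type*} [LinearOrder K]
    {I : A → NonemptyInterval B} {κ : A → K} (hκ : IsSOrderKey I κ)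
    (hI : ∀ a b, b ∈ I a ↔ G.Adj a b)
    (hA : ∀ (a : A) (x y z : B), x ≤ y → y ≤ z → G.Adj a x → G.Adj a z → G.Adj a y) :
    ∃ lA : LinearOrder A, SOrdering G A B lA lB := by
  let e : A → K ×ₗ A := fun a => toLex (κ a, a)
  have hκ_mono : ∀ x y, e x ≤ e y → κ x ≤ κ y := fun x y => Prod.Lex.monotone_fst _ _
  refine ⟨LinearOrder.lift' e fun a a' h => congrArg (fun p => (ofLex p).2) h,
    ⟨hA, fun b x y z hxy hyz hx hz => ?_⟩, fun ai aj bs br hs hr hcross => ?_⟩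
  · exact (hI y b).1 (hκ.1 b x y z (hκ_mono _ _ hxy) (hκ_mono _ _ hyz) ((hI x b).2 hx)
      ((hI z b).2 hz))
  rcases hcross with ⟨hij, hrs⟩ | ⟨hji, hsr⟩
  · exact (hκ.mem_or_mem (hκ_mono _ _ (show e ai < e aj from hij).le) hrs
      ((hI _ _).2 hs) ((hI _ _).2 hr)).imp (hI _ _).1 (hI _ _).1
  · exact ((hκ.mem_or_mem (hκ_mono _ _ (show e aj < e ai from hji).le) hsr
      ((hI _ _).2 hr) ((hI _ _).2 hs)).imp (hI _ _).1 (hI _ _).1).symm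

open IntervalFamily in
/-- Every finite connected biconvex bipartite graph has a biconvex S-ordering. -/
theorem connected_biconvex_bipartite_exists_sOrdering
    {V : Type*} [Fintype V] (G : SimpleGraph V) (hconn : G.Connected)
    (A B : Set V) (hbip : IsBipartiteWith G A B)
    (hbiconvex : ∃ (lA : LinearOrder ↥A) (lB : LinearOrder ↥B),
      BiconvexOrdering G A B lA lB) :
    ∃ (lA : LinearOrder ↥A) (lB : LinearOrder ↥B), SOrdering G A B lA lB := by
  obtain ⟨lA, lB, hbcA, hbcB⟩ := hbiconvex
  by_cases hN : ∀ a : A, ∃ b : B, G.Adj a b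
  swap
  · obtain ⟨a, ha⟩ := not_forall.1 hN
    have hno := hconn.preconnected.not_adj_of_forall_not_adj
      fun v hv => ha ⟨⟨v, hbip.mem_right_of_adj a.2 hv⟩, hv⟩
    exact ⟨lA, lB, ⟨hbcA, hbcB⟩, fun ai _ bs _ h => (hno _ _ h).elim⟩
  obtain ⟨I, hI⟩ := exists_nonemptyInterval_of_ordConnected
    (fun a => ⟨fun x hx z hz y hy => hbcA a x y z hy.1 hy.2 hx hz⟩) hN
  obtain ⟨κ, hκ⟩ := exists_isSOrderKey (I := I)
    (fun b => ⟨fun x hx z hz y hy => (hI y b).2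
      (hbcB b x y z hy.1 hy.2 ((hI x b).1 hx) ((hI z b).1 hz))⟩) (hbip.noGap hconn hI)
  obtain ⟨lA', hlA'⟩ := hκ.exists_sOrdering hI hbcA
  exact ⟨lA', lB, hlA'⟩
end

section
/- If G is a caterpillar of order n (a finite tree containing a path P such that every vertex not on P is adjacent to a vertex of P), then the burning number of G satisfies b(G) ≤ ⌈√n⌉. -/
/-!
Project the caterpillar onto its spine `p₀ p₁ … p_ℓ`, each leaf onto its neighbour on the
spine, and let `d t = 1` if `p_t` carries leaves. A ball of radius `r` around `p_i` contains
the fibre of `t` as soon as `|t - i| + d t ≤ r`, and that fibre has at least `1 + d t`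
vertices, so it suffices to burn positions of weight `1 + d t` and total weight `≤ n ≤ k²`.
Burning greedily from the left, the largest remaining ball, of radius `r`, covers weight at
least `2r + 1`, so of a total weight `≤ (r + 1)²` at most `r²` is left for the smaller balls.
It only falls short when it stops just before a position with leaves; then the next two balls,
the smaller one first, cover weight `(r + 1)² - (r - 1)²`. Taking the spine maximal makes its
last vertex leafless, so this never happens at the end of the spine.
-/

/-- A caterpillar: a tree containing a path `P` such that every vertex not on `P`
is adjacent to a vertex of `P`. -/
def IsCaterpillar {V : Type*} (T : SimpleGraph V) : Prop :=
  T.IsTree ∧ ∃ (u v : V) (p : T.Walk u v), p.IsPath ∧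
    ∀ w, w ∉ p.support → ∃ x ∈ p.support, T.Adj w x

/-- The burning number of `G`: the least `k` for which there is a burning
sequence `x 0, …, x (k-1)` (where `x i` is the `(i+1)`-st burned source) such
that every vertex `v` satisfies `dist v (x i) ≤ k - (i + 1)` for some `i`. -/
noncomputable def burningNumber {V : Type*} (G : SimpleGraph V) : ℕ :=
  sInf {k : ℕ | ∃ x : Fin k → V, ∀ v : V, ∃ i : Fin k,
    G.dist v (x i) ≤ k - (i.val + 1)}

open Finset

namespace PathBurning

variable (d : ℕ → ℕ)

def pathWeight (a b : ℕ) : ℕ := ∑ t ∈ Ico a b, (d t + 1)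

def PathBurnable (k : ℕ) (S : Set ℕ) : Prop :=
  ∃ c : Fin k → ℕ, ∀ t ∈ S, ∃ i : Fin k, Nat.dist t (c i) + d t ≤ k - (i + 1)

variable {d}

lemma pathWeight_add {a b c : ℕ} (hab : a ≤ b) (hbc : b ≤ c) :
    pathWeight d a b + pathWeight d b c = pathWeight d a c :=
  sum_Ico_consecutive _ hab hbc

lemma pathWeight_eq (a b : ℕ) : pathWeight d a b = ∑ t ∈ Ico a b, d t + (b - a) := by
  simp [pathWeight, sum_add_distrib]

lemma sub_add_le_pathWeight {a b s : ℕ} (has : a ≤ s) (hsb : s < b) :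
    b - a + d s ≤ pathWeight d a b := by
  rw [pathWeight_eq]
  have := single_le_sum (fun t _ => Nat.zero_le (d t)) (mem_Ico.2 ⟨has, hsb⟩)
  omega

lemma sub_add_add_le_pathWeight {a b s s' : ℕ} (has : a ≤ s) (hss' : s < s') (hs'b : s' < b) :
    b - a + d s + d s' ≤ pathWeight d a b := by
  rw [pathWeight_eq]
  have : d s + d s' ≤ ∑ t ∈ Ico a b, d t := by
    rw [← sum_pair hss'.ne]
    exact sum_le_sum_of_subset fun _ => by simp only [mem_insert, mem_singleton, mem_Ico]; omega
  omega

lemma eq_zero_of_pathWeight_le {a b s : ℕ} (hw : pathWeight d a b ≤ b - a + d a) (has : a < s)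
    (hsb : s < b) : d s = 0 := by
  have := sub_add_add_le_pathWeight (d := d) le_rfl has hsb
  omega

lemma pathWeight_le_card {V : Type*} [Fintype V] [DecidableEq V] {m : ℕ} (f : V → ℕ)
    (hf : ∀ x, f x < m) (hd : ∀ t < m, d t + 1 ≤ #{x | f x = t}) :
    pathWeight d 0 m ≤ Fintype.card V := by
  rw [← card_univ, card_eq_sum_card_fiberwise (t := Ico 0 m) fun x _ => by simpa using hf x]
  exact sum_le_sum fun t ht => hd t (mem_Ico.1 ht).2

lemma pathBurnable_of_le (k : ℕ) {a m : ℕ} (hma : m ≤ a) : PathBurnable d k (Set.Ico a m) :=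
  ⟨fun _ => 0, fun _ ht => absurd (ht.1.trans_lt ht.2) (not_lt.2 hma)⟩

lemma PathBurnable.cons {r c : ℕ} {S T : Set ℕ}
    (hc : ∀ t ∈ S, t ∉ T → Nat.dist t c + d t ≤ r) (h : PathBurnable d r T) :
    PathBurnable d (r + 1) S := by
  obtain ⟨c', hc'⟩ := h
  refine ⟨Fin.cons c c', fun t ht => ?_⟩
  by_cases htT : t ∈ T
  · obtain ⟨i, hi⟩ := hc' t htT
    exact ⟨i.succ, by simpa using hi⟩
  · exact ⟨0, by simpa using hc t ht htT⟩

section Greedy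

variable (hd : ∀ t, d t ≤ 1)
include hd

lemma PathBurnable.cons_ball {r a : ℕ} {S T : Set ℕ} (hda : d a ≤ r)
    (hS : ∀ t ∈ S, t ∉ T → a ≤ t ∧ t + d t ≤ a + 2 * r - d a)
    (h : PathBurnable d r T) :
    PathBurnable d (r + 1) S :=
  h.cons (c := a + r - d a) fun t ht htT => by
    obtain ⟨hat, hte⟩ := hS t ht htT
    have := hd t
    unfold Nat.dist
    rcases eq_or_lt_of_le hat with rfl | hat <;> omega

lemma PathBurnable.cons_greedy {r a b m : ℕ} (hda : d a ≤ r)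
    (hb : ∀ t, a ≤ t → t < b → t + d t ≤ a + 2 * r - d a)
    (h : PathBurnable d r (Set.Ico b m)) :
    PathBurnable d (r + 1) (Set.Ico a m) :=
  h.cons_ball hd hda fun t ht htb => by
    simp only [Set.mem_Ico, not_and, not_lt] at ht htb
    exact ⟨ht.1, hb t ht.1 (by omega)⟩

lemma PathBurnable.cons_greedy_swap {r a e m : ℕ} (hr : 1 ≤ r)
    (he : e = a + 2 * (r + 1) - d a) (he2 : d (e - 2) = 0) (he1 : d (e - 1) = 0)
    (h : PathBurnable d r (Set.Ico (e - 1 + 2 * (r + 1)) m)) :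
    PathBurnable d (r + 2) (Set.Ico a m) := by
  have hda := hd a
  have hfront : PathBurnable d (r + 1) (Set.Ico a (e - 1) ∪ Set.Ico (e - 1 + 2 * (r + 1)) m) :=
    h.cons_ball hd (a := a) (by omega) fun t ht htT => by
      simp only [Set.mem_union, Set.mem_Ico, not_and, not_lt] at ht htT
      obtain ⟨hat, hte⟩ : a ≤ t ∧ t < e - 1 := by omega
      refine ⟨hat, ?_⟩
      obtain ht | rfl := (show t < e - 2 ∨ t = e - 2 by omega)
      · have := hd t; omega
      · omega
  refine hfront.cons_ball hd (a := e - 1) (by omega) fun t ht htT => ?_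
  simp only [Set.mem_union, Set.mem_Ico, not_and, not_lt, not_or] at ht htT
  have := hd t
  omega

lemma pathBurnable_Ico_of_blocked {K a e m : ℕ} (hm : d (m - 1) = 0)
    (ih : ∀ j < K + 1, ∀ b, pathWeight d b m ≤ j ^ 2 → PathBurnable d j (Set.Ico b m))
    (hw : pathWeight d a m ≤ (K + 1) ^ 2) (hda : d a ≤ K) (he : e = a + 2 * K - d a)
    (hde : d e ≠ 0) (hem : e < m) (hwe : pathWeight d a e ≤ 2 * K) :
    PathBurnable d (K + 1) (Set.Ico a m) := by
  have hda1 := hd a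
  have hae : a < e := by
    by_contra h
    obtain rfl : e = a := by omega
    omega
  have he1 : e + 1 < m := by
    by_contra h
    obtain rfl : e = m - 1 := by omega
    exact hde hm
  have hwm := sub_add_add_le_pathWeight (d := d) le_rfl hae hem
  have hK : 2 ≤ K := by
    have : (K + 1) ^ 2 = K ^ 2 + 2 * K + 1 := by ring
    have : 2 ≤ K ^ 2 := by have := hd e; omega
    nlinarith
  obtain ⟨r, rfl⟩ : ∃ r, K = r + 1 := ⟨K - 1, by omega⟩
  have hwe' : pathWeight d a e ≤ e - a + d a := by omega
  refine .cons_greedy_swap hd (by omega) he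
    (eq_zero_of_pathWeight_le hwe' (by omega) (by omega))
    (eq_zero_of_pathWeight_le hwe' (by omega) (by omega)) (ih r (by omega) _ ?_)
  obtain ⟨e', he'⟩ : ∃ e', e' = e - 1 + 2 * (r + 1) := ⟨_, rfl⟩
  rw [← he']
  rcases le_or_gt m e' with hme' | he'm
  · simp [pathWeight, Ico_eq_empty_of_le hme']
  have := sub_add_add_le_pathWeight (d := d) (le_refl a) hae (show e < e' by omega)
  have := pathWeight_add (d := d) (show a ≤ e' by omega) he'm.le
  have : (r + 1 + 1) ^ 2 = r ^ 2 + 4 * r + 4 := by ring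
  have := hd e
  omega

theorem pathBurnable_Ico {m : ℕ} (hm : d (m - 1) = 0) (k a : ℕ)
    (hw : pathWeight d a m ≤ k ^ 2) : PathBurnable d k (Set.Ico a m) := by
  induction k using Nat.strong_induction_on generalizing a with
  | _ k ih =>
  rcases le_or_gt m a with hma | ham
  · exact pathBurnable_of_le k hma
  have hwa := sub_add_le_pathWeight (d := d) le_rfl ham
  obtain ⟨K, rfl⟩ : ∃ K, k = K + 1 := Nat.exists_eq_succ_of_ne_zero (by rintro rfl; omega)
  have hsq : (K + 1) ^ 2 = K ^ 2 + 2 * K + 1 := by ring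
  have hda := hd a
  have hdaK : d a ≤ K := by
    obtain rfl | hK := Nat.eq_zero_or_pos K
    · norm_num at hw; omega
    · omega
  have tail : ∀ b, a ≤ b → (b < m → 2 * K + 1 ≤ pathWeight d a b) →
      PathBurnable d K (Set.Ico b m) := by
    intro b hab hb
    rcases le_or_gt m b with hmb | hbm
    · exact pathBurnable_of_le K hmb
    · exact ih K K.lt_succ_self b
        (by have := pathWeight_add (d := d) hab hbm.le; have := hb hbm; omega)
  obtain ⟨e, he⟩ : ∃ e, e = a + 2 * K - d a := ⟨_, rfl⟩
  by_cases hlight : d e = 0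
  · refine .cons_greedy hd hdaK (b := e + 1) (fun t _ ht => ?_) (tail (e + 1) (by omega) ?_)
    · obtain ht | rfl := Nat.lt_succ_iff_lt_or_eq.1 ht
      · have := hd t; omega
      · omega
    · have := sub_add_le_pathWeight (d := d) (le_refl a) (show a < e + 1 by omega)
      omega
  by_cases hcut : e < m → 2 * K + 1 ≤ pathWeight d a e
  · exact .cons_greedy hd hdaK (fun t _ ht => by have := hd t; omega) (tail e (by omega) hcut)
  push Not at hcut
  exact pathBurnable_Ico_of_blocked hd hm ih hw hdaK he hlight hcut.1 (by omega)

end Greedy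

end PathBurning

open PathBurning

lemma burningNumber_le {V : Type*} {G : SimpleGraph V} {k : ℕ} (x : Fin k → V)
    (hx : ∀ v, ∃ i : Fin k, G.dist v (x i) ≤ k - (i + 1)) : burningNumber G ≤ k :=
  Nat.sInf_le ⟨x, hx⟩

namespace SimpleGraph

variable {V : Type*} {G : SimpleGraph V}

def Walk.IsDominating {u v : V} (p : G.Walk u v) : Prop :=
  ∀ w ∉ p.support, ∃ x ∈ p.support, G.Adj w x

lemma Walk.dist_getVert_le {u v : V} (p : G.Walk u v) (i j : ℕ) :
    G.dist (p.getVert i) (p.getVert j) ≤ Nat.dist i j := by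
  wlog hij : i ≤ j generalizing i j
  · rw [dist_comm, Nat.dist_comm]
    exact this j i (by omega)
  have := G.dist_le ((p.drop i).take (j - i))
  rw [Walk.take_length, Walk.drop_getVert, Nat.add_sub_cancel' hij] at this
  rw [Nat.dist_eq_sub_of_le hij]
  omega

theorem Walk.IsPath.exists_isDominating_forall_adj_mem [Fintype V] {u v : V} {p : G.Walk u v}
    (hp : p.IsPath) (hdom : p.IsDominating) :
    ∃ (u' v' : V) (q : G.Walk u' v'),
      q.IsPath ∧ q.IsDominating ∧ ∀ w, G.Adj v' w → w ∈ q.support := by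
  by_cases hend : ∀ w, G.Adj v w → w ∈ p.support
  · exact ⟨u, v, p, hp, hdom, hend⟩
  push Not at hend
  obtain ⟨w, hvw, hw⟩ := hend
  refine Walk.IsPath.exists_isDominating_forall_adj_mem (hp.concat hw hvw) fun x hx => ?_
  rw [Walk.support_concat, List.mem_append, not_or] at hx
  obtain ⟨y, hy, hxy⟩ := hdom x hx.1
  exact ⟨y, by simp [Walk.support_concat, hy], hxy⟩
termination_by Fintype.card V - p.length
decreasing_by
  have := (hp.concat hw hvw).length_lt
  rw [Walk.length_concat] at this ⊢
  omega

lemma burningNumber_le_of_pathBurnable {u v : V} {d : ℕ → ℕ} {k : ℕ} (p : G.Walk u v)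
    (pos : V → ℕ) (hpos : ∀ x, pos x ≤ p.length)
    (hdist : ∀ x, G.dist x (p.getVert (pos x)) ≤ d (pos x))
    (h : PathBurnable d k (Set.Ico 0 (p.length + 1))) : burningNumber G ≤ k := by
  obtain ⟨c, hc⟩ := h
  refine burningNumber_le (fun i => p.getVert (c i)) fun x => ?_
  obtain ⟨i, hi⟩ := hc (pos x) ⟨Nat.zero_le _, Nat.lt_succ_of_le (hpos x)⟩
  refine ⟨i, ?_⟩
  have hreach : G.Reachable (p.getVert (pos x)) (p.getVert (c i)) :=
    (p.take (pos x)).reachable.symm.trans (p.take (c i)).reachable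
  calc G.dist x (p.getVert (c i))
      ≤ G.dist x (p.getVert (pos x)) + G.dist (p.getVert (pos x)) (p.getVert (c i)) :=
        hreach.dist_triangle_right x
    _ ≤ d (pos x) + Nat.dist (pos x) (c i) := add_le_add (hdist x) (p.dist_getVert_le _ _)
    _ ≤ k - (i + 1) := by omega

lemma Walk.IsDominating.exists_getVert {u v : V} {p : G.Walk u v} (hdom : p.IsDominating)
    (x : V) : ∃ t ≤ p.length,
      (x ∈ p.support → p.getVert t = x) ∧ (x ∉ p.support → G.Adj x (p.getVert t)) := by
  by_cases hx : x ∈ p.support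
  · obtain ⟨t, rfl, ht⟩ := Walk.mem_support_iff_exists_getVert.1 hx
    exact ⟨t, ht, fun _ => rfl, fun h => absurd hx h⟩
  · obtain ⟨y, hy, hxy⟩ := hdom x hx
    obtain ⟨t, rfl, ht⟩ := Walk.mem_support_iff_exists_getVert.1 hy
    exact ⟨t, ht, fun h => absurd h hx, fun _ => hxy⟩

theorem burningNumber_le_of_isDominating [Fintype V] {u v : V} {p : G.Walk u v} (hp : p.IsPath)
    (hdom : p.IsDominating) (hend : ∀ w, G.Adj v w → w ∈ p.support) {k : ℕ}
    (hk : Fintype.card V ≤ k ^ 2) : burningNumber G ≤ k := by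
  classical
  choose pos hpos_le hpos_mem hpos_adj using hdom.exists_getVert
  have hpos_getVert : ∀ t ≤ p.length, pos (p.getVert t) = t := fun t ht =>
    hp.getVert_injOn (hpos_le _) ht (hpos_mem _ (p.getVert_mem_support t))
  set d : ℕ → ℕ := fun t => if ∃ x ∉ p.support, pos x = t then 1 else 0 with hd_def
  have hd1 : ∀ t, d t ≤ 1 := fun t => by simp only [hd_def]; split_ifs <;> omega
  have hlast : d (p.length + 1 - 1) = 0 :=
    if_neg fun ⟨x, hx, hxt⟩ => hx (hend x (by simpa [hxt] using (hpos_adj x hx).symm))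
  have hweight : pathWeight d 0 (p.length + 1) ≤ Fintype.card V := by
    refine pathWeight_le_card pos (fun x => Nat.lt_succ_of_le (hpos_le x)) fun t ht => ?_
    have hspine : p.getVert t ∈ ({x | pos x = t} : Finset V) := by
      simp [hpos_getVert t (by omega)]
    by_cases hleaf : ∃ x ∉ p.support, pos x = t
    · obtain ⟨x, hx, hxt⟩ := hleaf
      have hne : x ≠ p.getVert t := fun h => hx (h ▸ p.getVert_mem_support t)
      have hdt : d t = 1 := if_pos ⟨x, hx, hxt⟩
      calc d t + 1 = #{x, p.getVert t} := by rw [card_pair hne, hdt]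
        _ ≤ #{x | pos x = t} := card_le_card (by simp [insert_subset_iff, hxt, hspine])
    · simp only [hd_def, if_neg hleaf, zero_add, one_le_card]
      exact ⟨_, hspine⟩
  refine burningNumber_le_of_pathBurnable p pos hpos_le (fun x => ?_)
    (pathBurnable_Ico hd1 hlast k 0 (hweight.trans hk))
  by_cases hx : x ∈ p.support
  · simp [hpos_mem x hx]
  · rw [show d (pos x) = 1 from if_pos ⟨x, hx, rfl⟩]
    exact (dist_eq_one_iff_adj.2 (hpos_adj x hx)).le

end SimpleGraph

/-- The burning number of a caterpillar of order `n` is at most `⌈√n⌉`. -/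
theorem burningNumber_le_of_isCaterpillar
    {V : Type*} [Fintype V] (G : SimpleGraph V) (hcat : IsCaterpillar G) :
    burningNumber G ≤ ⌈Real.sqrt (Fintype.card V)⌉₊ := by
  obtain ⟨-, u, v, p, hp, hdom⟩ := hcat
  obtain ⟨u', v', q, hq, hqdom, hend⟩ := hp.exists_isDominating_forall_adj_mem hdom
  refine SimpleGraph.burningNumber_le_of_isDominating hq hqdom hend ?_
  exact_mod_cast (Real.sqrt_le_left (by positivity)).1 (Nat.le_ceil √(Fintype.card V : ℝ))
end

section
/- Let G be a finite bipartite graph with nonempty parts A and B equipped with a biconvex S-ordering (<_A, <_B), let a_min be the least element of A and a_max the greatest element of A with respect to <_A, and suppose N(a_min) ∩ N(a_max) = ∅. Then for every y_0 ∈ N(a_min) and every y_1 ∈ N(a_max), we have y_0 <_B y_1. -/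
/-- In a finite bipartite graph with a biconvex S-ordering, if the least and the
greatest vertices of `A` have no common neighbor, then every neighbor of the
least vertex of `A` precedes every neighbor of the greatest vertex of `A`. -/
theorem neighbor_of_min_lt_neighbor_of_max
    {V : Type*} [Fintype V] (G : SimpleGraph V)
    (A B : Set V) (hA : A.Nonempty) (hB : B.Nonempty)
    (hbip : IsBipartiteWith G A B)
    (lA : LinearOrder ↥A) (lB : LinearOrder ↥B) (hS : SOrdering G A B lA lB)
    (amin amax : ↥A)
    (hmin : ∀ a : ↥A, lA.le amin a) (hmax : ∀ a : ↥A, lA.le a amax)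
    (hdisj : ∀ v : V, ¬ (G.Adj ↑amin v ∧ G.Adj ↑amax v)) :
    ∀ (y₀ y₁ : ↥B), G.Adj ↑amin ↑y₀ → G.Adj ↑amax ↑y₁ → lB.lt y₀ y₁ := by
  letI := lA
  letI := lB
  intro y₀ y₁ h0 h1
  have hne : amin ≠ amax := by
    intro hEq
    exact hdisj ↑y₁ ⟨hEq ▸ h1, h1⟩
  have hltA : lA.lt amin amax := lt_of_le_of_ne (hmin amax) hne
  rcases lt_trichotomy y₀ y₁ with h | h | h
  · exact h
  · cases h
    exact absurd ⟨h0, h1⟩ (hdisj ↑y₀)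
  · rcases hS.2 amin amax y₀ y₁ h0 h1 (Or.inl ⟨hltA, h⟩) with hc | hc
    · exact absurd ⟨hc, h1⟩ (hdisj ↑y₁)
    · exact absurd ⟨h0, hc⟩ (hdisj ↑y₀)
end

section
/- Let G be a finite bipartite graph with nonempty parts A and B equipped with a biconvex ordering (<_A, <_B), and let P be a path in G from the least element b_min of B to the greatest element b_max of B (with respect to <_B) whose vertices from B appear along P in increasing order of <_B. Then every vertex of B that is not on P is adjacent to some vertex of P. -/
/-- Let `P` be a path from the least to the greatest element of `B` whose
`B`-vertices appear along `P` in increasing order of `lB`.  Then every vertex of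
`B` not on `P` is adjacent to some vertex of `P`. -/
theorem b_vertices_dominated_by_increasing_path
    {V : Type*} [Fintype V] (G : SimpleGraph V)
    (A B : Set V) (hA : A.Nonempty) (hB : B.Nonempty)
    (hbip : IsBipartiteWith G A B)
    (lA : LinearOrder ↥A) (lB : LinearOrder ↥B)
    (hbiconvex : BiconvexOrdering G A B lA lB)
    (bmin bmax : ↥B)
    (hmin : ∀ b : ↥B, lB.le bmin b) (hmax : ∀ b : ↥B, lB.le b bmax)
    (p : G.Walk ↑bmin ↑bmax) (hp : p.IsPath)
    (hincr : ∀ (i j : Fin p.support.length), i < j →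
      ∀ (hi : p.support.get i ∈ B) (hj : p.support.get j ∈ B),
        lB.lt ⟨p.support.get i, hi⟩ ⟨p.support.get j, hj⟩) :
    ∀ b : ↥B, (↑b : V) ∉ p.support → ∃ x ∈ p.support, G.Adj ↑b x := by
  classical
  intro b hb
  obtain ⟨hAB, -, hadjAB⟩ := hbip
  set n := p.length with hn
  -- the predicate: getVert i is a B-vertex that is ≤ b
  set Q : ℕ → Prop := fun i => ∃ h : p.getVert i ∈ B, lB.le ⟨p.getVert i, h⟩ b with hQdef
  have hmemsup : ∀ i, i ≤ n → p.getVert i ∈ p.support := by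
    intro i hi
    rw [SimpleGraph.Walk.mem_support_iff_exists_getVert]
    exact ⟨i, rfl, hi⟩
  have hQ0 : Q 0 := by
    refine ⟨by rw [p.getVert_zero]; exact bmin.2, ?_⟩
    have : (⟨p.getVert 0, by rw [p.getVert_zero]; exact bmin.2⟩ : ↥B) = bmin :=
      Subtype.ext (p.getVert_zero)
    rw [this]; exact hmin b
  set i := Nat.findGreatest Q n with hi
  have hQi : Q i := Nat.findGreatest_spec (Nat.zero_le n) hQ0
  have hile : i ≤ n := Nat.findGreatest_le n
  have hgreatest : ∀ k, i < k → k ≤ n → ¬ Q k := fun k hk hkn =>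
    Nat.findGreatest_is_greatest hk hkn
  obtain ⟨hiB, hileb⟩ := hQi
  -- i ≠ n
  have hin : i ≠ n := by
    intro h
    have hgv : p.getVert i = (bmax : V) := by rw [h]; exact p.getVert_length
    have : (⟨p.getVert i, hiB⟩ : ↥B) = bmax := Subtype.ext hgv
    rw [this] at hileb
    have : b = bmax := lB.le_antisymm _ _ (hmax b) hileb
    exact hb (by rw [this]; exact p.end_mem_support)
  have hilt : i < n := lt_of_le_of_ne hile hin
  have h1 : G.Adj (p.getVert i) (p.getVert (i + 1)) := p.adj_getVert_succ hilt
  have hnotboth : ∀ x : V, x ∈ A → x ∈ B → False := by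
    intro x hxA hxB
    have : x ∈ A ∩ B := ⟨hxA, hxB⟩
    rw [hAB] at this; exact this
  have hi1A : p.getVert (i + 1) ∈ A := by
    rcases hadjAB h1 with ⟨h, -⟩ | ⟨-, h⟩
    · exact absurd hiB (fun hB => hnotboth _ h hB)
    · exact h
  have hi1n : i + 1 ≠ n := by
    intro h
    have hgv : p.getVert (i + 1) = (bmax : V) := by rw [h]; exact p.getVert_length
    exact hnotboth _ hi1A (by rw [hgv]; exact bmax.2)
  have hi1lt : i + 1 < n := lt_of_le_of_ne hilt hi1n
  have h2 : G.Adj (p.getVert (i + 1)) (p.getVert (i + 2)) := p.adj_getVert_succ hi1lt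
  have hi2B : p.getVert (i + 2) ∈ B := by
    rcases hadjAB h2 with ⟨-, h⟩ | ⟨h, -⟩
    · exact h
    · exact absurd hi1A (fun hA' => hnotboth _ hA' h)
  have hnotQ : ¬ Q (i + 2) := hgreatest (i + 2) (by omega) (by omega)
  have hble : lB.le b ⟨p.getVert (i + 2), hi2B⟩ := by
    rcases lB.le_total b ⟨p.getVert (i + 2), hi2B⟩ with h | h
    · exact h
    · exact absurd ⟨hi2B, h⟩ hnotQ
  have hadj : G.Adj (p.getVert (i + 1)) (↑b) :=
    hbiconvex.1 ⟨p.getVert (i + 1), hi1A⟩ ⟨p.getVert i, hiB⟩ b ⟨p.getVert (i + 2), hi2B⟩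
      hileb hble h1.symm h2
  exact ⟨p.getVert (i + 1), hmemsup _ (by omega), hadj.symm⟩
end

section
/- Let G be a finite bipartite graph with nonempty parts A and B equipped with a biconvex ordering (<_A, <_B), and let P be a path in G whose vertices from A appear along P in increasing order of <_A, with a_first the smallest and a_last the largest vertex of A on P with respect to <_A. Then every vertex a ∈ A with a_first <_A a <_A a_last that is not on P is adjacent to some vertex of P. -/
namespace SimpleGraph.Walk

variable {V : Type*} {G : SimpleGraph V}

theorem exists_adj_mem_not_mem_of_mem_support {u v x y : V} (p : G.Walk u v) (S : Set V)
    (hx : x ∈ p.support) (hy : y ∈ p.support) (hxS : x ∈ S) (hyS : y ∉ S) :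
    ∃ s ∈ p.support, ∃ t ∈ p.support, G.Adj s t ∧ s ∈ S ∧ t ∉ S := by
  classical
  let q := (p.takeUntil x hx).reverse.append (p.takeUntil y hy)
  have hq : q.support ⊆ p.support := by
    intro w hw
    rcases (mem_support_append_iff _ _).1 hw with hw | hw
    · rw [support_reverse, List.mem_reverse] at hw
      exact p.support_takeUntil_subset_support hx hw
    · exact p.support_takeUntil_subset_support hy hw
  obtain ⟨d, hd, hdS, hdS'⟩ := q.exists_boundary_dart S hxS hyS
  exact ⟨d.fst, hq (q.dart_fst_mem_support_of_mem_darts hd),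
    d.snd, hq (q.dart_snd_mem_support_of_mem_darts hd), d.adj, hdS, hdS'⟩

end SimpleGraph.Walk

namespace IsBipartiteWith

variable {V : Type*} {G : SimpleGraph V} {A B : Set V} {u v : V}

theorem disjoint (h : IsBipartiteWith G A B) : Disjoint A B :=
  Set.disjoint_iff_inter_eq_empty.2 h.1

theorem mem_right_of_adj_s12 (h : IsBipartiteWith G A B) (hu : u ∈ A) (huv : G.Adj u v) : v ∈ B := by
  rcases h.2.2 huv with ⟨-, hv⟩ | ⟨hu', -⟩
  · exact hv
  · exact absurd hu' (Set.disjoint_left.1 h.disjoint hu)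

theorem mem_left_of_adj (h : IsBipartiteWith G A B) (hu : u ∈ B) (huv : G.Adj u v) : v ∈ A := by
  rcases h.2.2 huv with ⟨hu', -⟩ | ⟨-, hv⟩
  · exact absurd hu (Set.disjoint_left.1 h.disjoint hu')
  · exact hv

theorem not_adj_of_mem_left (h : IsBipartiteWith G A B) (hu : u ∈ A) (hv : v ∈ A) :
    ¬G.Adj u v := fun huv =>
  Set.disjoint_left.1 h.disjoint hv (h.mem_right_of_adj_s12 hu huv)

end IsBipartiteWith

theorem exists_adj_mem_support_of_lt_of_le {V : Type*} {G : SimpleGraph V} {A B : Set V}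
    [LinearOrder A] (hbip : IsBipartiteWith G A B)
    (hconv : ∀ b ∈ B, {x : A | G.Adj x b}.OrdConnected)
    {u v : V} (p : G.Walk u v) {x z a : A} (hx : ↑x ∈ p.support) (hz : ↑z ∈ p.support)
    (hxa : x < a) (haz : a ≤ z) : ∃ b ∈ p.support, G.Adj a b := by
  let S : Set V := {w | ∃ y : A, y < a ∧ (↑y = w ∨ G.Adj y w)}
  have hzS : ↑z ∉ S := by
    rintro ⟨y, hya, hyz | hyz⟩
    · exact (hya.trans_le haz).ne (Subtype.ext hyz)
    · exact hbip.not_adj_of_mem_left y.2 z.2 hyz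
  obtain ⟨b, hb, t, ht, hbt, ⟨y, hya, hyb⟩, htS⟩ :=
    p.exists_adj_mem_not_mem_of_mem_support S hx hz ⟨x, hxa, Or.inl rfl⟩ hzS
  have hyb : G.Adj y b := hyb.resolve_left fun hyb => htS ⟨y, hya, Or.inr (hyb ▸ hbt)⟩
  have hbB : b ∈ B := hbip.mem_right_of_adj_s12 y.2 hyb
  have htA : t ∈ A := hbip.mem_left_of_adj hbB hbt
  have hat : a ≤ ⟨t, htA⟩ := not_lt.1 fun hta => htS ⟨⟨t, htA⟩, hta, Or.inl rfl⟩
  exact ⟨b, hb, (hconv b hbB).out hyb hbt.symm ⟨hya.le, hat⟩⟩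

theorem a_vertices_dominated_by_increasing_path_general
    {V : Type*} (G : SimpleGraph V)
    (A B : Set V)
    (hbip : IsBipartiteWith G A B)
    (lA : LinearOrder ↥A) (lB : LinearOrder ↥B)
    (hbiconvex : BiconvexOrdering G A B lA lB)
    (u v : V) (p : G.Walk u v)
    (afirst alast : ↥A)
    (hfirst : (↑afirst : V) ∈ p.support) (hlast : (↑alast : V) ∈ p.support) :
    ∀ a : ↥A, lA.lt afirst a → lA.lt a alast → (↑a : V) ∉ p.support →
      ∃ x ∈ p.support, G.Adj ↑a x := by
  intro a hfa hal _
  let _ := lA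
  have hconv : ∀ b ∈ B, {x : A | G.Adj x b}.OrdConnected := fun b hb =>
    ⟨fun x hx z hz y hy => hbiconvex.2 ⟨b, hb⟩ x y z hy.1 hy.2 hx hz⟩
  exact exists_adj_mem_support_of_lt_of_le hbip hconv p hfirst hlast hfa hal.le

/-- Let `P` be a path whose `A`-vertices appear along `P` in increasing order of
`lA`, with smallest `A`-vertex `afirst` and largest `A`-vertex `alast` on `P`.
Then every vertex of `A` strictly between `afirst` and `alast` that is not on
`P` is adjacent to some vertex of `P`. -/
theorem a_vertices_dominated_by_increasing_path
    {V : Type*} [Fintype V] (G : SimpleGraph V)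
    (A B : Set V) (hA : A.Nonempty) (hB : B.Nonempty)
    (hbip : IsBipartiteWith G A B)
    (lA : LinearOrder ↥A) (lB : LinearOrder ↥B)
    (hbiconvex : BiconvexOrdering G A B lA lB)
    (u v : V) (p : G.Walk u v) (hp : p.IsPath)
    (hincr : ∀ (i j : Fin p.support.length), i < j →
      ∀ (hi : p.support.get i ∈ A) (hj : p.support.get j ∈ A),
        lA.lt ⟨p.support.get i, hi⟩ ⟨p.support.get j, hj⟩)
    (afirst alast : ↥A)
    (hfirst : (↑afirst : V) ∈ p.support) (hlast : (↑alast : V) ∈ p.support)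
    (hbetween : ∀ a : ↥A, (↑a : V) ∈ p.support → lA.le afirst a ∧ lA.le a alast) :
    ∀ a : ↥A, lA.lt afirst a → lA.lt a alast → (↑a : V) ∉ p.support →
      ∃ x ∈ p.support, G.Adj ↑a x :=
  a_vertices_dominated_by_increasing_path_general G A B hbip lA lB hbiconvex u v p afirst alast
    hfirst hlast
end

section
/- If G is a finite connected chain graph of order n, then the burning number of G satisfies b(G) ≤ ⌈√n⌉. -/
/-- The pair of linear orders `(lA, lB)` is a chain ordering of `G = (A, B, E)`:
`N(u) ⊆ N(v)` whenever `u <_A v`, and `N(a) ⊇ N(b)` whenever `a <_B b`. -/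
def ChainOrdering {V : Type*} (G : SimpleGraph V) (A B : Set V)
    (lA : LinearOrder ↥A) (lB : LinearOrder ↥B) : Prop :=
  (∀ u v : ↥A, lA.lt u v → ∀ w : V, G.Adj ↑u w → G.Adj ↑v w) ∧
  (∀ a b : ↥B, lB.lt a b → ∀ w : V, G.Adj ↑b w → G.Adj ↑a w)

private lemma exists_adj_of_ne' {V : Type*} {G : SimpleGraph V} {u v : V}
    (h : G.Reachable u v) (hne : u ≠ v) : ∃ w, G.Adj u w := by
  obtain ⟨p⟩ := h
  cases p with
  | nil => exact absurd rfl hne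
  | cons h q => exact ⟨_, h⟩

/-- The top vertex of `A` in a chain ordering dominates `B` and has
eccentricity at most 2. -/
private lemma chain_center {V : Type*} [Fintype V] {G : SimpleGraph V}
    (hconn : G.Connected) {A B : Set V} (hd : A ∩ B = ∅) (hu : A ∪ B = Set.univ)
    (hadj : ∀ ⦃u v : V⦄, G.Adj u v → (u ∈ A ∧ v ∈ B) ∨ (u ∈ B ∧ v ∈ A))
    (ord : LinearOrder ↥A)
    (hc : ∀ u v : ↥A, ord.lt u v → ∀ w : V, G.Adj ↑u w → G.Adj ↑v w)
    (hA : A.Nonempty) :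
    ∃ v0 ∈ A, (∀ w ∈ B, G.Adj v0 w) ∧ (∀ w, G.dist w v0 ≤ 2) := by
  letI := ord
  haveI : Nonempty ↥A := hA.to_subtype
  obtain ⟨m, hm⟩ := Finite.exists_max (id : ↥A → ↥A)
  have hdisj : ∀ x, x ∈ A → x ∈ B → False := by
    intro x hxA hxB
    have : x ∈ A ∩ B := ⟨hxA, hxB⟩
    rw [hd] at this
    exact this
  have claim1 : ∀ w : V, (∃ u : ↥A, G.Adj ↑u w) → G.Adj ↑m w := by
    rintro w ⟨u, hu'⟩
    rcases lt_or_eq_of_le (hm u) with h | h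
    · exact hc u m h w hu'
    · exact (show u = m from h) ▸ hu'
  have claim2 : ∀ w ∈ B, G.Adj ↑m w := by
    intro w hwB
    have hne : w ≠ ↑m := by
      intro h; exact hdisj w (h ▸ m.2) hwB
    obtain ⟨y, hy⟩ := exists_adj_of_ne' (hconn.preconnected w ↑m) hne
    have hyA : y ∈ A := by
      rcases hadj hy with ⟨h1, h2⟩ | ⟨h1, h2⟩
      · exact absurd hwB (fun hb => hdisj w h1 hb)
      · exact h2
    exact claim1 w ⟨⟨y, hyA⟩, hy.symm⟩
  refine ⟨↑m, m.2, claim2, ?_⟩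
  intro w
  by_cases hw : w = ↑m
  · rw [hw, SimpleGraph.dist_self]; omega
  have hwAB : w ∈ A ∨ w ∈ B := by
    have : w ∈ A ∪ B := by rw [hu]; trivial
    exact this
  rcases hwAB with hwA | hwB
  · obtain ⟨y, hy⟩ := exists_adj_of_ne' (hconn.preconnected w ↑m) hw
    have hyB : y ∈ B := by
      rcases hadj hy with ⟨h1, h2⟩ | ⟨h1, h2⟩
      · exact h2
      · exact absurd hwA (fun ha => hdisj w ha h1)
    have hadj2 : G.Adj y ↑m := (claim2 y hyB).symm
    have : G.dist w ↑m ≤ (SimpleGraph.Walk.cons hy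
        (SimpleGraph.Walk.cons hadj2 SimpleGraph.Walk.nil)).length :=
      SimpleGraph.dist_le _
    simpa using this
  · have : G.dist w ↑m ≤ (SimpleGraph.Walk.cons (claim2 w hwB).symm
        SimpleGraph.Walk.nil).length := SimpleGraph.dist_le _
    simp only [SimpleGraph.Walk.length_cons, SimpleGraph.Walk.length_nil] at this
    omega

/-- If some side of the bipartition with a dominating vertex has at most two
vertices, then 2 is in the burning set. -/
private lemma two_mem {V : Type*} [Fintype V] {G : SimpleGraph V}
    {A B : Set V} (hu : A ∪ B = Set.univ) {v0 : V} (hv0 : v0 ∈ A)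
    (hdom : ∀ w ∈ B, G.Adj v0 w) (hcard : A.ncard ≤ 2) :
    ∃ x : Fin 2 → V, ∀ v : V, ∃ i : Fin 2, G.dist v (x i) ≤ 2 - (i.val + 1) := by
  classical
  have huniq : ∀ v w : V, v ∈ A → w ∈ A → v ≠ v0 → w ≠ v0 → v = w := by
    intro v w hv hw hv0' hw0'
    by_contra hvw
    have hsub : ({v0, v, w} : Set V) ⊆ A := by
      intro x hx
      rcases hx with h | h | h
      · exact h ▸ hv0
      · exact h ▸ hv
      · exact h ▸ hw
    have h3 : ({v0, v, w} : Set V).ncard = 3 :=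
      Set.ncard_eq_three.mpr ⟨v0, v, w, Ne.symm hv0', Ne.symm hw0', hvw, rfl⟩
    have := Set.ncard_le_ncard hsub A.toFinite
    omega
  have hB1 : ∀ v ∈ B, G.dist v v0 ≤ 1 := by
    intro v hv
    have : G.dist v v0 ≤ (SimpleGraph.Walk.cons (hdom v hv).symm
        SimpleGraph.Walk.nil).length := SimpleGraph.dist_le _
    simpa using this
  by_cases h : ∃ w, w ∈ A ∧ w ≠ v0
  · obtain ⟨w1, hw1, hne⟩ := h
    refine ⟨![v0, w1], ?_⟩
    intro v
    have hvAB : v ∈ A ∨ v ∈ B := by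
      have : v ∈ A ∪ B := by rw [hu]; trivial
      exact this
    rcases hvAB with hvA | hvB
    · by_cases hv0' : v = v0
      · exact ⟨0, by simp [hv0', SimpleGraph.dist_self]⟩
      · have : v = w1 := huniq v w1 hvA hw1 hv0' hne
        exact ⟨1, by simp [this, SimpleGraph.dist_self]⟩
    · exact ⟨0, by simpa using hB1 v hvB⟩
  · push_neg at h
    refine ⟨![v0, v0], ?_⟩
    intro v
    have hvAB : v ∈ A ∨ v ∈ B := by
      have : v ∈ A ∪ B := by rw [hu]; trivial
      exact this
    rcases hvAB with hvA | hvB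
    · have : v = v0 := h v hvA
      exact ⟨0, by simp [this, SimpleGraph.dist_self]⟩
    · exact ⟨0, by simpa using hB1 v hvB⟩

/-- The burning number conjecture holds for connected chain graphs. -/
theorem burningNumber_le_of_chainGraph
    {V : Type*} [Fintype V] (G : SimpleGraph V) (hconn : G.Connected)
    (A B : Set V) (hbip : IsBipartiteWith G A B)
    (hchain : ∃ (lA : LinearOrder ↥A) (lB : LinearOrder ↥B),
      ChainOrdering G A B lA lB) :
    burningNumber G ≤ ⌈Real.sqrt (Fintype.card V)⌉₊ := by
  classical
  obtain ⟨hd, hu, hadj⟩ := hbip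
  obtain ⟨lA, lB, hcA, hcB⟩ := hchain
  haveI : Nonempty V := hconn.nonempty
  set n := Fintype.card V with hn
  set m := ⌈Real.sqrt n⌉₊ with hmdef
  have hn1 : 1 ≤ n := Fintype.card_pos
  have hm1 : 1 ≤ m := by
    have h0 : (0:ℝ) < Real.sqrt n := Real.sqrt_pos.mpr (by positivity)
    exact Nat.ceil_pos.mpr h0
  by_cases h1 : n = 1
  · haveI : Subsingleton V := Fintype.card_le_one_iff_subsingleton.mp (by omega)
    obtain ⟨v0⟩ := ‹Nonempty V›
    apply Nat.sInf_le
    refine ⟨fun _ => v0, fun v => ⟨⟨0, by omega⟩, ?_⟩⟩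
    have hvv : v = v0 := Subsingleton.elim _ _
    simp [hvv, SimpleGraph.dist_self]
  have hn2 : 2 ≤ n := by omega
  obtain ⟨a, b, hab⟩ := Fintype.exists_pair_of_one_lt_card (by omega : 1 < Fintype.card V)
  obtain ⟨y, hy⟩ := exists_adj_of_ne' (hconn.preconnected a b) hab
  have hAB : A.Nonempty ∧ B.Nonempty := by
    rcases hadj hy with ⟨ha1, ha2⟩ | ⟨ha1, ha2⟩
    · exact ⟨⟨a, ha1⟩, ⟨y, ha2⟩⟩
    · exact ⟨⟨y, ha2⟩, ⟨a, ha1⟩⟩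
  by_cases h5 : 5 ≤ n
  · have hm3 : 3 ≤ m := by
      have : (2:ℕ) < m := by
        apply Nat.lt_ceil.mpr
        refine (Real.lt_sqrt (by norm_num)).mpr ?_
        push_cast
        norm_num
        exact_mod_cast (by omega : (4:ℕ) < n)
      omega
    obtain ⟨v0, hv0A, _, hecc⟩ := chain_center hconn hd hu hadj lA hcA hAB.1
    apply Nat.sInf_le
    refine ⟨fun _ => v0, fun v => ⟨⟨0, by omega⟩, ?_⟩⟩
    have h2 := hecc v
    simp only []
    omega
  · have hm2 : m = 2 := by
      have hle : m ≤ 2 := by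
        apply Nat.ceil_le.mpr
        refine (Real.sqrt_le_left (by norm_num)).mpr ?_
        have h4 : (n:ℝ) ≤ 4 := by exact_mod_cast (by omega : n ≤ 4)
        push_cast
        nlinarith [h4]
      have hgt : (1:ℕ) < m := by
        apply Nat.lt_ceil.mpr
        refine (Real.lt_sqrt (by norm_num)).mpr ?_
        have h2' : (2:ℝ) ≤ n := by exact_mod_cast hn2
        push_cast
        nlinarith [h2']
      omega
    rw [hm2]
    have hsum : A.ncard + B.ncard = n := by
      rw [← Set.ncard_union_eq (Set.disjoint_iff_inter_eq_empty.mpr hd), hu,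
        Set.ncard_univ, Nat.card_eq_fintype_card]
    have hsmall : A.ncard ≤ 2 ∨ B.ncard ≤ 2 := by omega
    rcases hsmall with hA2 | hB2
    · obtain ⟨v0, hv0A, hdom, _⟩ := chain_center hconn hd hu hadj lA hcA hAB.1
      obtain ⟨x, hx⟩ := two_mem hu hv0A hdom hA2
      exact Nat.sInf_le ⟨x, hx⟩
    · have hd' : B ∩ A = ∅ := by rw [Set.inter_comm]; exact hd
      have hu' : B ∪ A = Set.univ := by rw [Set.union_comm]; exact hu
      have hadj' : ∀ ⦃u v : V⦄, G.Adj u v → (u ∈ B ∧ v ∈ A) ∨ (u ∈ A ∧ v ∈ B) :=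
        fun u v h => (hadj h).symm
      letI ordB : LinearOrder ↥B := @OrderDual.instLinearOrder ↥B lB
      have hcB' : ∀ u v : ↥B, ordB.lt u v → ∀ w : V, G.Adj ↑u w → G.Adj ↑v w :=
        fun u v h w hw => hcB v u h w hw
      obtain ⟨v0, hv0B, hdom, _⟩ := chain_center hconn hd' hu' hadj' ordB hcB' hAB.2
      obtain ⟨x, hx⟩ := two_mem hu' hv0B hdom hB2
      exact Nat.sInf_le ⟨x, hx⟩
end
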